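/- arXiv:2402.08809 — 10 statements merged into one kernel-verified Lean document; each statement's English description precedes it below -/
import Mathlib

section
/- Let D be a nonempty type, let S be a nonempty finite index set, and for each i ∈ S let Q_i : D → ℝ. If ⋂_{i∈S} argmin Q_i ≠ ∅, then argmin of the function x ↦ Σ_{i∈S} Q_i(x) equals ⋂_{i∈S} argmin Q_i. -/
/-- The set of minimum points of a real-valued function `Q` on `D`. -/
def argminSet {D : Type*} (Q : D → ℝ) : Set D := {x | ∀ y, Q x ≤ Q y}

/-- If the intersection of the argmin sets of the `Q i` for `i ∈ S` is nonempty,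
then the argmin set of the sum `x ↦ ∑ i ∈ S, Q i x` equals that intersection. -/
theorem argmin_sum_eq_iInter_argmin
    {D ι : Type*} [Nonempty D] (S : Finset ι) (hS : S.Nonempty)
    (Q : ι → D → ℝ)
    (h : (⋂ i ∈ S, argminSet (Q i)).Nonempty) :
    argminSet (fun x => ∑ i ∈ S, Q i x) = ⋂ i ∈ S, argminSet (Q i) := by
  obtain ⟨z, hz⟩ := h
  simp only [Set.mem_iInter] at hz
  ext x
  simp only [Set.mem_iInter, argminSet, Set.mem_setOf_eq]
  constructor
  · intro hx
    have hsum : ∑ i ∈ S, Q i x ≤ ∑ i ∈ S, Q i z := hx z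
    have heq : ∀ i ∈ S, Q i x = Q i z := by
      have := (Finset.sum_le_sum (fun i hi => hz i hi x)).antisymm hsum
      intro i hi
      have h1 := Finset.sum_eq_sum_iff_of_le (fun i hi => hz i hi x) |>.mp this i hi
      exact h1.symm
    intro i hi y
    rw [heq i hi]
    exact hz i hi y
  · intro hx y
    exact Finset.sum_le_sum (fun i hi => hx i hi y)
end

section
/- Let D be a nonempty type, let V be a finite set with |V| = n ≥ 2f+1, and for each i ∈ V let Q_i : D → ℝ. Assume ⋂_{i∈V} argmin Q_i ≠ ∅. Then the following are equivalent: (a) for every subset S ⊆ V with |S| ≥ n−2f, argmin(x ↦ Σ_{i∈S} Q_i(x)) = argmin(x ↦ Σ_{i∈V} Q_i(x)); (b) for every subset S ⊆ V with |S| ≥ n−2f, ⋂_{i∈S} argmin Q_i = ⋂_{i∈V} argmin Q_i. -/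
lemma argminSet_sum_eq {D ι : Type*} (Q : ι → D → ℝ) (x0 : D)
    (hx0 : x0 ∈ ⋂ i, argminSet (Q i)) (S : Finset ι) :
    argminSet (fun x => ∑ i ∈ S, Q i x) = ⋂ i ∈ S, argminSet (Q i) := by
  simp only [Set.mem_iInter, argminSet, Set.mem_setOf_eq] at hx0
  ext x
  simp only [argminSet, Set.mem_setOf_eq, Set.mem_iInter]
  constructor
  · intro hx i hi y
    have h1 : ∑ j ∈ S, Q j x ≤ ∑ j ∈ S, Q j x0 := hx x0
    have h2 : ∀ j ∈ S, Q j x0 ≤ Q j x := fun j _ => hx0 j x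
    have heq : ∀ j ∈ S, Q j x0 = Q j x := by
      by_contra hc
      push_neg at hc
      obtain ⟨j, hj, hne⟩ := hc
      have : ∑ j ∈ S, Q j x0 < ∑ j ∈ S, Q j x :=
        Finset.sum_lt_sum h2 ⟨j, hj, lt_of_le_of_ne (h2 j hj) hne⟩
      linarith
    calc Q i x = Q i x0 := (heq i hi).symm
      _ ≤ Q i y := hx0 i y
  · intro hx y
    exact Finset.sum_le_sum fun i hi => hx i hi y

/-- For `n = |V| ≥ 2f + 1` agents with cost functions `Q i : D → ℝ` whose
argmin sets have nonempty common intersection, part (ii) of Property A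
(`argmin` of each partial aggregate with `|S| ≥ n − 2f` equals `argmin` of the
full aggregate) is equivalent to part (ii) of Property B (the corresponding
statement for intersections of the individual argmin sets). -/
theorem propertyA_iff_propertyB
    {D ι : Type*} [Nonempty D] [Fintype ι] (f : ℕ)
    (hn : 2 * f + 1 ≤ Fintype.card ι)
    (Q : ι → D → ℝ)
    (h : (⋂ i, argminSet (Q i)).Nonempty) :
    (∀ S : Finset ι, Fintype.card ι - 2 * f ≤ S.card →
        argminSet (fun x => ∑ i ∈ S, Q i x) =
          argminSet (fun x => ∑ i, Q i x)) ↔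
    (∀ S : Finset ι, Fintype.card ι - 2 * f ≤ S.card →
        ⋂ i ∈ S, argminSet (Q i) = ⋂ i, argminSet (Q i)) := by
  obtain ⟨x0, hx0⟩ := h
  have key : ∀ S : Finset ι,
      argminSet (fun x => ∑ i ∈ S, Q i x) = ⋂ i ∈ S, argminSet (Q i) :=
    argminSet_sum_eq Q x0 hx0
  have huniv : argminSet (fun x => ∑ i, Q i x) = ⋂ i, argminSet (Q i) := by
    rw [key Finset.univ]
    simp
  constructor
  · intro hA S hS
    rw [← key S, ← huniv, hA S hS]
  · intro hB S hS
    rw [key S, huniv, hB S hS]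
end

section
/- Let V be a finite set with |V| = n ≥ 2f+1 and let (X_i)_{i∈V} be subsets of a set Y satisfying 2f-redundancy (Property B). Let F ⊆ V with |F| ≤ f and let (Y_i)_{i∈V} be subsets of Y such that Y_i = X_i for every i ∈ V \ F (Y_i is arbitrary for i ∈ F). Then there exists a subset T ⊆ V with |T| = n−f such that the intersections ⋂_{i∈T̂} Y_i are equal to one another over all subsets T̂ ⊆ T with |T̂| ≥ n−2f. -/
/-- Centralized algorithm, existence of a valid output set: with
`n = |V| ≥ 2f + 1` agents whose local sets `X i` satisfy `2f`-redundancy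
(Property B), a set `F` of at most `f` Byzantine agents, and reported sets
`Y i` that agree with `X i` for non-faulty agents, there exists a set `T` of
`n − f` agents such that all the intersections `⋂ i ∈ T̂, Y i` over subsets
`T̂ ⊆ T` with `|T̂| ≥ n − 2f` are equal to one another. -/
theorem centralized_output_exists
    {ι Z : Type*} [Fintype ι] (f : ℕ)
    (hn : 2 * f + 1 ≤ Fintype.card ι)
    (X : ι → Set Z)
    (hB1 : (⋂ i, X i).Nonempty)
    (hB2 : ∀ S : Finset ι, Fintype.card ι - 2 * f ≤ S.card →
      ⋂ i ∈ S, X i = ⋂ i, X i)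
    (F : Finset ι) (hF : F.card ≤ f)
    (Y : ι → Set Z) (hY : ∀ i ∉ F, Y i = X i) :
    ∃ T : Finset ι, T.card = Fintype.card ι - f ∧
      ∀ T₁ T₂ : Finset ι, T₁ ⊆ T → T₂ ⊆ T →
        Fintype.card ι - 2 * f ≤ T₁.card → Fintype.card ι - 2 * f ≤ T₂.card →
        ⋂ i ∈ T₁, Y i = ⋂ i ∈ T₂, Y i := by
  classical
  have hcard : Fintype.card ι - f ≤ Fᶜ.card := by
    rw [Finset.card_compl]
    omega
  obtain ⟨T, hTsub, hTcard⟩ := Finset.exists_subset_card_eq hcard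
  refine ⟨T, hTcard, ?_⟩
  have key : ∀ S : Finset ι, S ⊆ T → Fintype.card ι - 2 * f ≤ S.card →
      ⋂ i ∈ S, Y i = ⋂ i, X i := by
    intro S hS hScard
    have : ⋂ i ∈ S, Y i = ⋂ i ∈ S, X i := by
      apply Set.iInter₂_congr
      intro i hi
      exact hY i (Finset.mem_compl.mp (hTsub (hS hi)))
    rw [this, hB2 S hScard]
  intro T₁ T₂ h1 h2 hc1 hc2
  rw [key T₁ h1 hc1, key T₂ h2 hc2]
end

section
/- Let V be a finite set with |V| = n ≥ 2f+1 and let (X_i)_{i∈V} be subsets of a set Y satisfying 2f-redundancy (Property B). Let F ⊆ V with |F| ≤ f and let (Y_i)_{i∈V} be subsets of Y such that Y_i = X_i for every i ∈ V \ F (Y_i is arbitrary for i ∈ F). Then for every subset T ⊆ V with |T| = n−f such that the intersections ⋂_{i∈T̂} Y_i are equal to one another over all subsets T̂ ⊆ T with |T̂| ≥ n−2f, it holds that ⋂_{i∈T} Y_i = ⋂_{i∈V} X_i. -/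
/-- Centralized algorithm, correctness: with `n = |V| ≥ 2f + 1` agents whose
local sets `X i` satisfy `2f`-redundancy (Property B), a set `F` of at most
`f` Byzantine agents, and reported sets `Y i` that agree with `X i` for
non-faulty agents, every set `T` of `n − f` agents for which all intersections
`⋂ i ∈ T̂, Y i` over subsets `T̂ ⊆ T` with `|T̂| ≥ n − 2f` agree, satisfies
`⋂ i ∈ T, Y i = ⋂ i, X i`. -/
theorem centralized_output_correct
    {ι Z : Type*} [Fintype ι] (f : ℕ)
    (hn : 2 * f + 1 ≤ Fintype.card ι)
    (X : ι → Set Z)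
    (hB1 : (⋂ i, X i).Nonempty)
    (hB2 : ∀ S : Finset ι, Fintype.card ι - 2 * f ≤ S.card →
      ⋂ i ∈ S, X i = ⋂ i, X i)
    (F : Finset ι) (hF : F.card ≤ f)
    (Y : ι → Set Z) (hY : ∀ i ∉ F, Y i = X i) :
    ∀ T : Finset ι, T.card = Fintype.card ι - f →
      (∀ T₁ T₂ : Finset ι, T₁ ⊆ T → T₂ ⊆ T →
        Fintype.card ι - 2 * f ≤ T₁.card → Fintype.card ι - 2 * f ≤ T₂.card →
        ⋂ i ∈ T₁, Y i = ⋂ i ∈ T₂, Y i) →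
      ⋂ i ∈ T, Y i = ⋂ i, X i := by
  intro T hTcard hagree
  classical
  set T' : Finset ι := T \ F with hT'
  have hT'card : Fintype.card ι - 2 * f ≤ T'.card := by
    have h1 : T.card - F.card ≤ T'.card := Finset.le_card_sdiff F T
    omega
  have hTbig : Fintype.card ι - 2 * f ≤ T.card := by omega
  have hstep : ⋂ i ∈ T, Y i = ⋂ i ∈ T', Y i :=
    hagree T T' (le_refl _) (hT' ▸ Finset.sdiff_subset) hTbig hT'card
  have hXY : ⋂ i ∈ T', Y i = ⋂ i ∈ T', X i := by
    apply Set.iInter₂_congr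
    intro i hi
    exact hY i (Finset.mem_sdiff.mp hi).2
  rw [hstep, hXY, hB2 T' hT'card]
end

section
/- Let G = (V, E) be a finite directed graph without self-loops with |V| = n ≥ 2f+2, and suppose G satisfies Condition A. Then G satisfies Condition B, i.e., for every F ⊆ V with |F| ≤ f and every reduced graph G_F of G, every source component of G_F has at least n−2f vertices. -/
variable {ι : Type*}

/-- The set of incoming neighbors of `i` in the directed graph with edge
relation `E` (`E j i` means there is an edge from `j` to `i`). -/
def inNbr (E : ι → ι → Prop) (i : ι) : Set ι := {j | E j i}

/-- Condition A: for every partition of the vertex set into disjoint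
nonempty `L`, nonempty `R`, and `F` with `|F| ≤ f`:
(a) if `|R| ≥ f + 1`, some `i ∈ L` has at least `f + 1` incoming neighbors in `R`;
(b) if `|L| ≥ f + 1`, some `i ∈ R` has at least `f + 1` incoming neighbors in `L`. -/
def ConditionA [Fintype ι] (E : ι → ι → Prop) (f : ℕ) : Prop :=
  ∀ L R F : Set ι, L.Nonempty → R.Nonempty → F.ncard ≤ f →
    Disjoint L R → Disjoint L F → Disjoint R F → L ∪ R ∪ F = Set.univ →
    (f + 1 ≤ R.ncard → ∃ i ∈ L, f + 1 ≤ (inNbr E i ∩ R).ncard) ∧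
    (f + 1 ≤ L.ncard → ∃ i ∈ R, f + 1 ≤ (inNbr E i ∩ L).ncard)

/-- `E'` is (the edge relation of) a reduced graph of the graph `E` with
respect to the faulty set `F`: all edges incident on `F` are removed, and at
each remaining node at most `f` further incoming edges are removed. -/
def IsReducedGraph (E : ι → ι → Prop) (f : ℕ) (F : Set ι)
    (E' : ι → ι → Prop) : Prop :=
  (∀ i j, E' i j → E i j) ∧
  (∀ i j, E' i j → i ∉ F ∧ j ∉ F) ∧
  (∀ i, i ∉ F → {j | j ∉ F ∧ E j i ∧ ¬ E' j i}.ncard ≤ f)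

/-- `S` is a source component of the directed graph with vertex set `W` and
edge relation `E'`: a (nonempty, maximal) strongly connected component such
that no edge enters `S` from outside `S`. -/
def IsSourceComponent (W : Set ι) (E' : ι → ι → Prop) (S : Set ι) : Prop :=
  S.Nonempty ∧ S ⊆ W ∧
  (∀ i ∈ S, ∀ j ∈ S, Relation.ReflTransGen E' i j) ∧
  (∀ j ∈ W, ∀ i ∈ S, Relation.ReflTransGen E' i j →
    Relation.ReflTransGen E' j i → j ∈ S) ∧
  (∀ j i, i ∈ S → E' j i → j ∈ S)

/-- Condition B: for every `F` with `|F| ≤ f` and every reduced graph `G_F`,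
every source component of `G_F` has at least `n − 2f` vertices. -/
def ConditionB [Fintype ι] (E : ι → ι → Prop) (f : ℕ) : Prop :=
  ∀ F : Set ι, F.ncard ≤ f →
    ∀ E' : ι → ι → Prop, IsReducedGraph E f F E' →
      ∀ S : Set ι, IsSourceComponent ((Set.univ : Set ι) \ F) E' S →
        Fintype.card ι - 2 * f ≤ S.ncard

/-- On a finite directed graph without self-loops with `n ≥ 2f + 2` vertices,
Condition A implies Condition B. -/
theorem conditionA_implies_conditionB
    {ι : Type*} [Fintype ι] (f : ℕ) (E : ι → ι → Prop)
    (hirr : ∀ i, ¬ E i i)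
    (hn : 2 * f + 2 ≤ Fintype.card ι)
    (hA : ConditionA E f) : ConditionB E f := by
  intro F hF E' hred S hS
  obtain ⟨hSne, hSsub, _, _, hclosed⟩ := hS
  by_contra hlt
  push_neg at hlt
  set R : Set ι := (Set.univ \ F) \ S with hRdef
  have hSF : Disjoint S F := by
    rw [Set.disjoint_left]; intro x hx; exact (hSsub hx).2
  have hSR : Disjoint S R := by
    rw [Set.disjoint_right]; intro x hx; exact hx.2
  have hRF : Disjoint R F := by
    rw [Set.disjoint_left]; intro x hx; exact hx.1.2
  have hunion : S ∪ R ∪ F = Set.univ := by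
    ext x
    simp only [Set.mem_union, Set.mem_univ, iff_true, hRdef, Set.mem_diff]
    by_cases hxF : x ∈ F
    · exact Or.inr hxF
    · by_cases hxS : x ∈ S
      · exact Or.inl (Or.inl hxS)
      · exact Or.inl (Or.inr ⟨⟨trivial, hxF⟩, hxS⟩)
  have hcard : S.ncard + R.ncard + F.ncard = Fintype.card ι := by
    have h2 : (S ∪ R ∪ F).ncard = Fintype.card ι := by
      rw [hunion, Set.ncard_univ, Nat.card_eq_fintype_card]
    rw [Set.ncard_union_eq (Disjoint.union_left hSF hRF)
        (Set.toFinite _) (Set.toFinite _),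
      Set.ncard_union_eq hSR (Set.toFinite _) (Set.toFinite _)] at h2
    exact h2
  have hRcard : f + 1 ≤ R.ncard := by omega
  have hRne : R.Nonempty := Set.nonempty_of_ncard_ne_zero (by omega)
  obtain ⟨ha, _⟩ := hA S R F hSne hRne hF hSR hSF hRF hunion
  obtain ⟨i, hiS, hcnt⟩ := ha hRcard
  obtain ⟨hEmono, hEF, hrem⟩ := hred
  have hiF : i ∉ F := (hSsub hiS).2
  have hD : {j | j ∉ F ∧ E j i ∧ ¬ E' j i}.ncard ≤ f := hrem i hiF
  have hex : ∃ j ∈ R, E' j i := by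
    by_contra hno
    push_neg at hno
    have hsub : inNbr E i ∩ R ⊆ {j | j ∉ F ∧ E j i ∧ ¬ E' j i} := by
      intro j hj
      exact ⟨hj.2.1.2, hj.1, hno j hj.2⟩
    have := Set.ncard_le_ncard hsub (Set.toFinite _)
    omega
  obtain ⟨j, hjR, hjE⟩ := hex
  exact hjR.2 (hclosed j i hiS hjE)
end

section
/- Let G = (V, E) be a finite directed graph without self-loops with |V| = n, where n > 3f and n ≥ 2f+2, and suppose G satisfies Condition A. Then for every F ⊆ V with |F| ≤ f and every reduced graph G_F of G, G_F has exactly one source component. -/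
variable {ι : Type*}

section Aux

variable {ι : Type*}

/-- Existence of a source component in a finite digraph. -/
lemma exists_source_component_aux [Fintype ι] (W : Set ι) (E' : ι → ι → Prop)
    (hW : W.Nonempty) (hE'W : ∀ i j, E' i j → i ∈ W ∧ j ∈ W) :
    ∃ S : Set ι, S.Nonempty ∧ S ⊆ W ∧
      (∀ i ∈ S, ∀ j ∈ S, Relation.ReflTransGen E' i j) ∧
      (∀ j ∈ W, ∀ i ∈ S, Relation.ReflTransGen E' i j →
        Relation.ReflTransGen E' j i → j ∈ S) ∧
      (∀ j i, i ∈ S → E' j i → j ∈ S) := by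
  set Anc : ι → Set ι := fun x => {y | Relation.ReflTransGen E' y x} with hAnc
  obtain ⟨x, hxW, hmin⟩ := Set.exists_min_image W (fun x => (Anc x).ncard) W.toFinite hW
  refine ⟨{y | Relation.ReflTransGen E' y x ∧ Relation.ReflTransGen E' x y},
    ⟨x, ⟨.refl, .refl⟩⟩, ?_, ?_, ?_, ?_⟩
  · rintro y ⟨hyx, hxy⟩
    rcases Relation.ReflTransGen.cases_head hyx with h | ⟨z, hz, _⟩
    · exact h ▸ hxW
    · exact (hE'W _ _ hz).1
  · rintro i ⟨hix, hxi⟩ j ⟨hjx, hxj⟩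
    exact hix.trans hxj
  · rintro j hjW i ⟨hix, hxi⟩ hij hji
    exact ⟨hji.trans hix, hxi.trans hij⟩
  · rintro j i ⟨hix, hxi⟩ hji
    have hjW : j ∈ W := (hE'W _ _ hji).1
    have hjx : Relation.ReflTransGen E' j x := (Relation.ReflTransGen.single hji).trans hix
    by_cases hxj : Relation.ReflTransGen E' x j
    · exact ⟨hjx, hxj⟩
    · exfalso
      have hsub : Anc j ⊂ Anc x := by
        constructor
        · intro y hy
          exact (hy.trans hjx : Relation.ReflTransGen E' y x)
        · intro hle
          exact hxj (hle (Relation.ReflTransGen.refl : Relation.ReflTransGen E' x x))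
      have := Set.ncard_lt_ncard hsub (Set.toFinite _)
      exact absurd (hmin j hjW) (by omega)

end Aux

/-- Key lemma: the complement (within the non-faulty vertices) of a source
component of a reduced graph has at most `f` vertices. -/
lemma source_component_compl_small [Fintype ι] (f : ℕ) (E : ι → ι → Prop)
    (hA : ConditionA E f) (F : Set ι) (hF : F.ncard ≤ f)
    (E' : ι → ι → Prop) (hred : IsReducedGraph E f F E')
    (S : Set ι) (hS : IsSourceComponent ((Set.univ : Set ι) \ F) E' S) :
    (((Set.univ : Set ι) \ F) \ S).ncard ≤ f := by
  by_contra hbig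
  push_neg at hbig
  set W : Set ι := (Set.univ : Set ι) \ F with hW
  set R : Set ι := W \ S with hRdef
  have hSW : S ⊆ W := hS.2.1
  have hSne : S.Nonempty := hS.1
  have hRne : R.Nonempty := Set.nonempty_of_ncard_ne_zero (by omega)
  have hdisjLR : Disjoint S R := Set.disjoint_sdiff_right.mono_left le_rfl |>.mono_right le_rfl
  have hdisjLF : Disjoint S F := by
    rw [Set.disjoint_left]; intro a ha; exact (hSW ha).2
  have hdisjRF : Disjoint R F := by
    rw [Set.disjoint_left]; intro a ha; exact ha.1.2
  have hunion : S ∪ R ∪ F = Set.univ := by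
    ext a; simp only [Set.mem_union, Set.mem_univ, iff_true]
    by_cases haF : a ∈ F
    · exact Or.inr haF
    · by_cases haS : a ∈ S
      · exact Or.inl (Or.inl haS)
      · exact Or.inl (Or.inr ⟨⟨trivial, haF⟩, haS⟩)
  obtain ⟨ha, -⟩ := hA S R F hSne hRne hF hdisjLR hdisjLF hdisjRF hunion
  obtain ⟨i, hiS, hnbr⟩ := ha (by omega)
  have hiF : i ∉ F := (hSW hiS).2
  have hrem := hred.2.2 i hiF
  -- find an in-neighbor of i in R whose edge survives
  have : ∃ j ∈ inNbr E i ∩ R, E' j i := by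
    by_contra hno
    push_neg at hno
    have hsub : inNbr E i ∩ R ⊆ {j | j ∉ F ∧ E j i ∧ ¬ E' j i} := by
      rintro j ⟨hjE, hjR⟩
      exact ⟨hjR.1.2, hjE, hno j ⟨hjE, hjR⟩⟩
    have := Set.ncard_le_ncard hsub (Set.toFinite _)
    omega
  obtain ⟨j, ⟨hjE, hjR⟩, hji⟩ := this
  exact hjR.2 (hS.2.2.2.2 j i hiS hji)


/-- On a finite directed graph without self-loops with `n > 3f` and
`n ≥ 2f + 2` vertices satisfying Condition A, every reduced graph `G_F`
(for `|F| ≤ f`) has exactly one source component. -/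
theorem conditionA_unique_source_component
    {ι : Type*} [Fintype ι] (f : ℕ) (E : ι → ι → Prop)
    (hirr : ∀ i, ¬ E i i)
    (hn3 : 3 * f < Fintype.card ι)
    (hn : 2 * f + 2 ≤ Fintype.card ι)
    (hA : ConditionA E f) :
    ∀ F : Set ι, F.ncard ≤ f →
      ∀ E' : ι → ι → Prop, IsReducedGraph E f F E' →
        ∃! S : Set ι, IsSourceComponent ((Set.univ : Set ι) \ F) E' S := by
  intro F hF E' hred
  set W : Set ι := (Set.univ : Set ι) \ F with hWdef
  have hWcard : W.ncard = Fintype.card ι - F.ncard := by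
    rw [Set.ncard_diff (Set.subset_univ F), Set.ncard_univ, Nat.card_eq_fintype_card]
  have hWne : W.Nonempty := by
    apply Set.nonempty_of_ncard_ne_zero
    omega
  have hE'W : ∀ i j, E' i j → i ∈ W ∧ j ∈ W := by
    intro i j h
    obtain ⟨h1, h2⟩ := hred.2.1 i j h
    exact ⟨⟨trivial, h1⟩, ⟨trivial, h2⟩⟩
  obtain ⟨S, hS⟩ := exists_source_component_aux W E' hWne hE'W
  refine ⟨S, hS, ?_⟩
  intro T hT
  by_contra hne
  -- distinct source components are disjoint
  have hdisj : Disjoint T S := by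
    rw [Set.disjoint_left]
    intro x hxT hxS
    apply hne
    apply Set.eq_of_subset_of_subset
    · intro y hyT
      exact hS.2.2.2.1 y (hT.2.1 hyT) x hxS
        (hT.2.2.1 x hxT y hyT) (hT.2.2.1 y hyT x hxT)
    · intro y hyS
      exact hT.2.2.2.1 y (hS.2.1 hyS) x hxT
        (hS.2.2.1 x hxS y hyS) (hS.2.2.1 y hyS x hxS)
  have h1 : (W \ S).ncard ≤ f :=
    source_component_compl_small f E hA F hF E' hred S hS
  have h2 : (W \ T).ncard ≤ f :=
    source_component_compl_small f E hA F hF E' hred T hT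
  have hST : S ⊆ W \ T := fun y hy => ⟨hS.2.1 hy, fun hyT => Set.disjoint_left.mp hdisj hyT hy⟩
  have hScard : S.ncard ≤ f := le_trans (Set.ncard_le_ncard hST (Set.toFinite _)) h2
  have hsplit : (W \ S).ncard + S.ncard = W.ncard :=
    Set.ncard_diff_add_ncard_of_subset hS.2.1 (Set.toFinite _)
  omega
end

section
/- Let G = (V, E) be a finite directed graph without self-loops with |V| = n ≥ 2f+2, and suppose G satisfies Condition A. Then for every F ⊆ V with |F| = φ ≤ f and every reduced graph G_F of G, every source component of G_F has at least n−φ−f vertices. -/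
variable {ι : Type*}

/-- On a finite directed graph without self-loops with `n ≥ 2f + 2` vertices
satisfying Condition A, for every `F` with `|F| = φ ≤ f` and every reduced
graph `G_F`, every source component of `G_F` has at least `n − φ − f`
vertices. -/
theorem conditionA_source_component_card
    {ι : Type*} [Fintype ι] (f : ℕ) (E : ι → ι → Prop)
    (hirr : ∀ i, ¬ E i i)
    (hn : 2 * f + 2 ≤ Fintype.card ι)
    (hA : ConditionA E f) :
    ∀ (F : Set ι) (φ : ℕ), F.ncard = φ → φ ≤ f →
      ∀ E' : ι → ι → Prop, IsReducedGraph E f F E' →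
        ∀ S : Set ι, IsSourceComponent ((Set.univ : Set ι) \ F) E' S →
          Fintype.card ι - φ - f ≤ S.ncard := by
  intro F φ hFφ hφf E' hred S hS
  by_contra hcon
  push_neg at hcon
  obtain ⟨hSne, hSsub, _, _, hsrc⟩ := hS
  set R : Set ι := (Set.univ \ F) \ S with hR
  have hSF : Disjoint S F := by
    rw [Set.disjoint_left]; intro x hx1 hx2; exact (hSsub hx1).2 hx2
  have hSR : Disjoint S R := by
    rw [Set.disjoint_left]; intro x hx1 hx2; exact hx2.2 hx1
  have hRF : Disjoint R F := by
    rw [Set.disjoint_left]; intro x hx1 hx2; exact hx1.1.2 hx2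
  have hunion : S ∪ R ∪ F = Set.univ := by
    ext x; simp only [Set.mem_union, Set.mem_univ, iff_true]
    by_cases hxF : x ∈ F
    · right; exact hxF
    · by_cases hxS : x ∈ S
      · exact Or.inl (Or.inl hxS)
      · exact Or.inl (Or.inr ⟨⟨trivial, hxF⟩, hxS⟩)
  have hcard : S.ncard + R.ncard + F.ncard = Fintype.card ι := by
    rw [← Nat.card_eq_fintype_card, ← Set.ncard_univ ι, ← hunion,
      Set.ncard_union_eq (Set.disjoint_union_left.mpr ⟨hSF, hRF⟩)
        ((S.toFinite).union (R.toFinite)) F.toFinite,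
      Set.ncard_union_eq hSR S.toFinite R.toFinite]
  have hRge : f + 1 ≤ R.ncard := by omega
  have hRne : R.Nonempty := Set.nonempty_of_ncard_ne_zero (by omega)
  obtain ⟨ha, _⟩ := hA S R F hSne hRne (hFφ ▸ hφf) hSR hSF hRF hunion
  obtain ⟨i, hiS, hi⟩ := ha hRge
  obtain ⟨hE'E, hE'F, hrem⟩ := hred
  have hiF : i ∉ F := (hSsub hiS).2
  have hB := hrem i hiF
  have hex : ∃ j ∈ inNbr E i ∩ R, E' j i := by
    by_contra hno
    push_neg at hno
    have hsub : inNbr E i ∩ R ⊆ {j | j ∉ F ∧ E j i ∧ ¬ E' j i} := by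
      rintro j ⟨hj1, hj2⟩
      exact ⟨hj2.1.2, hj1, hno j ⟨hj1, hj2⟩⟩
    have := Set.ncard_le_ncard hsub (Set.toFinite _)
    omega
  obtain ⟨j, ⟨hjE, hjR⟩, hjE'⟩ := hex
  exact hjR.2 (hsrc j i hiS hjE')
end

section
/- Let G = (V, E) be a finite directed graph without self-loops with |V| = n ≥ 2f+2, and suppose G satisfies Condition B. Then G satisfies Condition A. -/
variable {ι : Type*}

section Aux

variable {ι : Type*}

lemma inClosed_mem_of_reach {E' : ι → ι → Prop} {L' : Set ι}
    (hcl : ∀ j i, i ∈ L' → E' j i → j ∈ L') {j i : ι}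
    (h : Relation.ReflTransGen E' j i) (hi : i ∈ L') : j ∈ L' := by
  induction h with
  | refl => exact hi
  | tail hab hbc ih => exact ih (hcl _ _ hi hbc)

lemma exists_source_component_in [Fintype ι] {E' : ι → ι → Prop} {W L' : Set ι}
    (hne : L'.Nonempty) (hsub : L' ⊆ W)
    (hcl : ∀ j i, i ∈ L' → E' j i → j ∈ L') :
    ∃ S : Set ι, IsSourceComponent W E' S ∧ S ⊆ L' := by
  classical
  obtain ⟨x, hxL, hmin⟩ := Set.exists_min_image L'
    (fun x => {j | Relation.ReflTransGen E' j x}.ncard) (Set.toFinite _) hne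
  refine ⟨{j | Relation.ReflTransGen E' j x}, ?_, ?_⟩
  case refine_2 => exact fun j hj => inClosed_mem_of_reach hcl hj hxL
  have hSsub : {j | Relation.ReflTransGen E' j x} ⊆ L' :=
    fun j hj => inClosed_mem_of_reach hcl hj hxL
  have hback : ∀ j ∈ {j | Relation.ReflTransGen E' j x}, Relation.ReflTransGen E' x j := by
    intro j hj
    have hjL : j ∈ L' := hSsub hj
    have hsub2 : {k | Relation.ReflTransGen E' k j} ⊆ {j | Relation.ReflTransGen E' j x} :=
      fun k hk => Relation.ReflTransGen.trans hk hj
    have heq : {k | Relation.ReflTransGen E' k j} = {j | Relation.ReflTransGen E' j x} :=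
      Set.eq_of_subset_of_ncard_le hsub2 (hmin j hjL) (Set.toFinite _)
    have : x ∈ {k | Relation.ReflTransGen E' k j} := by
      rw [heq]; exact Relation.ReflTransGen.refl
    exact this
  refine ⟨⟨x, Relation.ReflTransGen.refl⟩, fun j hj => hsub (hSsub hj), ?_, ?_, ?_⟩
  · intro i hi j hj
    exact Relation.ReflTransGen.trans hi (hback j hj)
  · intro j _ i hi _ hji
    exact Relation.ReflTransGen.trans hji hi
  · intro j i hi hE
    exact Relation.ReflTransGen.trans (Relation.ReflTransGen.single hE) hi

lemma key_contradiction [Fintype ι] (f : ℕ) (E : ι → ι → Prop)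
    (hn : 2 * f + 2 ≤ Fintype.card ι) (hB : ConditionB E f)
    (L R F : Set ι) (hL : L.Nonempty) (hF : F.ncard ≤ f)
    (hLR : Disjoint L R) (hLF : Disjoint L F) (hRF : Disjoint R F)
    (hunion : L ∪ R ∪ F = Set.univ)
    (hR : f + 1 ≤ R.ncard)
    (hsmall : ∀ i ∈ L, (inNbr E i ∩ R).ncard ≤ f) : False := by
  classical
  set n := Fintype.card ι with hn'
  have hLpos : 1 ≤ L.ncard := by
    rw [Nat.one_le_iff_ne_zero, Ne, Set.ncard_eq_zero (Set.toFinite _)]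
    exact fun h => hL.ne_empty h
  -- total cardinality
  have hcards : L.ncard + R.ncard + F.ncard = n := by
    have hd1 : Disjoint (L ∪ R) F := Set.disjoint_union_left.mpr ⟨hLF, hRF⟩
    have h1 : (L ∪ R ∪ F).ncard = (L ∪ R).ncard + F.ncard :=
      Set.ncard_union_eq hd1 (Set.toFinite _) (Set.toFinite _)
    have h2 : (L ∪ R).ncard = L.ncard + R.ncard :=
      Set.ncard_union_eq hLR (Set.toFinite _) (Set.toFinite _)
    rw [hunion, h2] at h1
    rw [← h1, Set.ncard_univ, Nat.card_eq_fintype_card]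
  -- choose Y ⊆ L to pad the faulty set
  set m := min (f - F.ncard) (L.ncard - 1) with hm
  have hmle : m ≤ L.ncard := le_trans (min_le_right _ _) (Nat.sub_le _ _)
  obtain ⟨Y, hYL, hYcard⟩ := Set.exists_subset_card_eq hmle
  set F' := F ∪ Y with hF'
  have hFY : Disjoint F Y := (hLF.symm.mono_right hYL)
  have hF'card : F'.ncard = F.ncard + m := by
    rw [hF', Set.ncard_union_eq hFY (Set.toFinite _) (Set.toFinite _), hYcard]
  have hF'le : F'.ncard ≤ f := by
    rw [hF'card, hm]
    have := min_le_left (f - F.ncard) (L.ncard - 1)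
    omega
  set L'' := L \ Y with hL''
  have hL''card : L''.ncard = L.ncard - m := by
    rw [hL'', Set.ncard_diff hYL (Set.toFinite _), hYcard]
  have hL''ne : L''.Nonempty := by
    apply Set.nonempty_of_ncard_ne_zero
    have h2 : m ≤ L.ncard - 1 := min_le_right _ _
    omega
  -- the reduced graph
  set E' : ι → ι → Prop := fun j i => E j i ∧ j ∉ F' ∧ i ∉ F' ∧ ¬(i ∈ L'' ∧ j ∈ R)
    with hE'
  have hL''F' : ∀ i ∈ L'', i ∉ F' := by
    intro i hi
    rcases hi with ⟨hiL, hiY⟩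
    intro hiF'
    rcases hiF' with h | h
    · exact Set.disjoint_left.mp hLF hiL h
    · exact hiY h
  have hred : IsReducedGraph E f F' E' := by
    refine ⟨fun i j h => h.1, fun i j h => ⟨h.2.1, h.2.2.1⟩, ?_⟩
    intro i hiF'
    by_cases hiL : i ∈ L''
    · have hsubset : {j | j ∉ F' ∧ E j i ∧ ¬ E' j i} ⊆ inNbr E i ∩ R := by
        intro j hj
        obtain ⟨hjF', hEji, hnE'⟩ := hj
        have : i ∈ L'' ∧ j ∈ R := by
          by_contra hc
          exact hnE' ⟨hEji, hjF', hiF', hc⟩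
        exact ⟨hEji, this.2⟩
      have hiLL : i ∈ L := hiL.1
      exact le_trans (Set.ncard_le_ncard hsubset (Set.toFinite _)) (hsmall i hiLL)
    · have hempty : {j | j ∉ F' ∧ E j i ∧ ¬ E' j i} = ∅ := by
        ext j
        simp only [Set.mem_setOf_eq, Set.mem_empty_iff_false, iff_false, not_and]
        intro hjF' hEji hnE'
        apply hnE'
        exact ⟨hEji, hjF', hiF', fun hc => hiL hc.1⟩
      rw [hempty, Set.ncard_empty]
      exact Nat.zero_le _
  -- L'' is closed under incoming edges of E'
  have hcl : ∀ j i, i ∈ L'' → E' j i → j ∈ L'' := by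
    intro j i hi hji
    obtain ⟨hEji, hjF', hiF', hnot⟩ := hji
    have hjR : j ∉ R := fun hjR => hnot ⟨hi, hjR⟩
    have hjuniv : j ∈ L ∪ R ∪ F := by rw [hunion]; trivial
    have hjL : j ∈ L := by
      rcases hjuniv with (h | h) | h
      · exact h
      · exact absurd h hjR
      · exact absurd (Or.inl h) hjF'
    exact ⟨hjL, fun hjY => hjF' (Or.inr hjY)⟩
  have hsubW : L'' ⊆ (Set.univ : Set ι) \ F' :=
    fun i hi => ⟨trivial, hL''F' i hi⟩
  obtain ⟨S, hS, hSsub⟩ := exists_source_component_in hL''ne hsubW hcl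
  have hBS : n - 2 * f ≤ S.ncard := hB F' hF'le E' hred S hS
  have hSle : S.ncard ≤ L''.ncard := Set.ncard_le_ncard hSsub (Set.toFinite _)
  have hm1 : m = f - F.ncard ∨ m = L.ncard - 1 := min_choice _ _
  have hm2 : m ≤ f - F.ncard := min_le_left _ _
  have hm3 : m ≤ L.ncard - 1 := min_le_right _ _
  omega

end Aux

/-- On a finite directed graph without self-loops with `n ≥ 2f + 2` vertices,
Condition B implies Condition A. -/
theorem conditionB_implies_conditionA
    {ι : Type*} [Fintype ι] (f : ℕ) (E : ι → ι → Prop)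
    (hirr : ∀ i, ¬ E i i)
    (hn : 2 * f + 2 ≤ Fintype.card ι)
    (hB : ConditionB E f) : ConditionA E f := by
  intro L R F hLne hRne hF hLR hLF hRF hunion
  constructor
  · intro hR
    by_contra hc
    push_neg at hc
    exact key_contradiction f E hn hB L R F hLne hF hLR hLF hRF hunion hR
      (fun i hi => Nat.lt_succ_iff.mp (hc i hi))
  · intro hL
    by_contra hc
    push_neg at hc
    have hunion' : R ∪ L ∪ F = Set.univ := by
      rw [← hunion]; rw [Set.union_comm R L]
    exact key_contradiction f E hn hB R L F hRne hF hLR.symm hRF hLF hunion' hL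
      (fun i hi => Nat.lt_succ_iff.mp (hc i hi))
end

section
/- Let G = (V, E) be a finite directed graph without self-loops with |V| = n ≥ 2f+2. Then G satisfies Condition A if and only if G satisfies Condition B. -/
variable {ι : Type*}

section Aux

variable {ι : Type*}

private lemma closed_rtg {E' : ι → ι → Prop} {C : Set ι}
    (hcl : ∀ j i, i ∈ C → E' j i → j ∈ C) :
    ∀ {j i}, Relation.ReflTransGen E' j i → i ∈ C → j ∈ C := by
  intro j i h
  induction h with
  | refl => exact id
  | tail h' e ih => exact fun hi => ih (hcl _ _ hi e)

/-- In a predecessor-closed nonempty set `C ⊆ W`, there is a source component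
of `(W, E')` contained in `C`. -/
private lemma exists_sourceComponent [Fintype ι] (E' : ι → ι → Prop) (W C : Set ι)
    (hCW : C ⊆ W) (hne : C.Nonempty) (hcl : ∀ j i, i ∈ C → E' j i → j ∈ C) :
    ∃ S : Set ι, S ⊆ C ∧ IsSourceComponent W E' S := by
  set A : ι → Set ι := fun i => {j | Relation.ReflTransGen E' j i} with hA
  obtain ⟨i₀, hi₀C, hmin⟩ := Set.exists_min_image C (fun i => (A i).ncard) C.toFinite hne
  have hSsub : A i₀ ⊆ C := fun j hj => closed_rtg hcl hj hi₀C
  have key : ∀ j ∈ A i₀, Relation.ReflTransGen E' i₀ j := by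
    intro j hj
    have hAsub : A j ⊆ A i₀ := fun k hk => Relation.ReflTransGen.trans hk hj
    have hle : (A i₀).ncard ≤ (A j).ncard := hmin j (hSsub hj)
    have heq : A j = A i₀ := Set.eq_of_subset_of_ncard_le hAsub hle (A i₀).toFinite
    have : i₀ ∈ A i₀ := Relation.ReflTransGen.refl
    rw [← heq] at this
    exact this
  refine ⟨A i₀, hSsub, ⟨i₀, Relation.ReflTransGen.refl⟩, hSsub.trans hCW, ?_, ?_, ?_⟩
  · intro i hi j hj
    exact Relation.ReflTransGen.trans hi (key j hj)
  · intro j _ i hi _ hji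
    exact Relation.ReflTransGen.trans hji hi
  · intro j i hi e
    exact Relation.ReflTransGen.trans (Relation.ReflTransGen.single e) hi

/-- The key step for `B → A`: part (a) of Condition A follows from Condition B. -/
private lemma keyBA [Fintype ι] (f : ℕ) (E : ι → ι → Prop)
    (hn : 2 * f + 2 ≤ Fintype.card ι) (hB : ConditionB E f)
    (L R F : Set ι) (hL : L.Nonempty) (_hR : R.Nonempty) (hF : F.ncard ≤ f)
    (hLR : Disjoint L R) (hLF : Disjoint L F) (hRF : Disjoint R F)
    (hcover : L ∪ R ∪ F = Set.univ) (hRc : f + 1 ≤ R.ncard) :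
    ∃ i ∈ L, f + 1 ≤ (inNbr E i ∩ R).ncard := by
  by_contra hcon
  push_neg at hcon
  have hcon' : ∀ i ∈ L, (inNbr E i ∩ R).ncard ≤ f := by
    intro i hi; exact Nat.lt_succ_iff.mp (hcon i hi)
  have hsum : L.ncard + R.ncard + F.ncard = Fintype.card ι := by
    have h1 : (L ∪ R ∪ F).ncard = Fintype.card ι := by
      rw [hcover, Set.ncard_univ, Nat.card_eq_fintype_card]
    rwa [Set.ncard_union_eq (Set.disjoint_union_left.mpr ⟨hLF, hRF⟩),
      Set.ncard_union_eq hLR] at h1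
  have hLpos : 1 ≤ L.ncard := (Set.ncard_pos L.toFinite).mpr hL
  -- move `min (f - |F|) (|L| - 1)` vertices of `L` into the faulty set
  obtain ⟨Y, hYL, hYcard⟩ :=
    Set.exists_subset_card_eq (s := L) (n := min (f - F.ncard) (L.ncard - 1)) (by omega)
  set L' : Set ι := L \ Y with hL'def
  set F' : Set ι := F ∪ Y with hF'def
  have hYF : Disjoint F Y := hLF.symm.mono_right hYL
  have hF'card : F'.ncard = F.ncard + Y.ncard := Set.ncard_union_eq hYF
  have hL'card : L'.ncard = L.ncard - Y.ncard := Set.ncard_diff hYL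
  have hYle : Y.ncard ≤ L.ncard := Set.ncard_le_ncard hYL
  have hL'ne : L'.Nonempty := by
    apply Set.nonempty_of_ncard_ne_zero; omega
  set E' : ι → ι → Prop :=
    fun j i => E j i ∧ j ∉ F' ∧ i ∉ F' ∧ ¬(i ∈ L' ∧ j ∈ R) with hE'def
  have hL'F' : ∀ x ∈ L', x ∉ F' := by
    intro x hx hxF'
    rcases hxF' with h | h
    · exact Set.disjoint_left.mp hLF hx.1 h
    · exact hx.2 h
  -- the reduced graph property
  have hred : IsReducedGraph E f F' E' := by
    refine ⟨fun i j h => h.1, fun i j h => ⟨h.2.1, h.2.2.1⟩, ?_⟩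
    intro i hiF'
    by_cases hiL' : i ∈ L'
    · have hsub : {j | j ∉ F' ∧ E j i ∧ ¬ E' j i} ⊆ inNbr E i ∩ R := by
        intro j hj
        obtain ⟨hjF', hEji, hnE'⟩ := hj
        have : ¬(E j i ∧ j ∉ F' ∧ i ∉ F' ∧ ¬(i ∈ L' ∧ j ∈ R)) := hnE'
        push_neg at this
        have hjR : j ∈ R := (this hEji hjF' hiF').2
        exact ⟨hEji, hjR⟩
      calc {j | j ∉ F' ∧ E j i ∧ ¬ E' j i}.ncard
          ≤ (inNbr E i ∩ R).ncard := Set.ncard_le_ncard hsub (inNbr E i ∩ R).toFinite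
        _ ≤ f := hcon' i hiL'.1
    · have hsub : {j | j ∉ F' ∧ E j i ∧ ¬ E' j i} = ∅ := by
        ext j
        simp only [Set.mem_setOf_eq, Set.mem_empty_iff_false, iff_false, not_and]
        intro hjF' hEji hnE'
        exact hnE' ⟨hEji, hjF', hiF', fun h => hiL' h.1⟩
      rw [hsub, Set.ncard_empty]; omega
  -- `L'` is predecessor-closed in the reduced graph
  have hcl : ∀ j i, i ∈ L' → E' j i → j ∈ L' := by
    intro j i hi he
    obtain ⟨hEji, hjF', _, hnot⟩ := he
    have hjR : j ∉ R := fun hjR => hnot ⟨hi, hjR⟩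
    have hjL : j ∈ L := by
      have := Set.eq_univ_iff_forall.mp hcover j
      rcases this with (h | h) | h
      · exact h
      · exact absurd h hjR
      · exact absurd (Or.inl h) hjF'
    exact ⟨hjL, fun hjY => hjF' (Or.inr hjY)⟩
  have hL'W : L' ⊆ (Set.univ : Set ι) \ F' :=
    fun x hx => ⟨Set.mem_univ x, hL'F' x hx⟩
  obtain ⟨S, hSL', hSC⟩ := exists_sourceComponent E' ((Set.univ : Set ι) \ F') L' hL'W hL'ne hcl
  have hBS := hB F' (by omega) E' hred S hSC
  have hScard : S.ncard ≤ L'.ncard := Set.ncard_le_ncard hSL' L'.toFinite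
  omega

end Aux

/-- On a finite directed graph without self-loops with `n ≥ 2f + 2` vertices,
Condition A and Condition B are equivalent. -/
theorem conditionA_iff_conditionB
    {ι : Type*} [Fintype ι] (f : ℕ) (E : ι → ι → Prop)
    (hirr : ∀ i, ¬ E i i)
    (hn : 2 * f + 2 ≤ Fintype.card ι) :
    ConditionA E f ↔ ConditionB E f := by
  constructor
  · -- A → B
    intro hA F hF E' hred S hS
    obtain ⟨hSne, hSW, _, _, hSedge⟩ := hS
    by_contra hlt
    push_neg at hlt
    set R : Set ι := (Set.univ \ F) \ S with hRdef
    have hSF : Disjoint S F := by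
      rw [Set.disjoint_left]; intro x hx; exact (hSW hx).2
    have hSR : Disjoint S R := by
      rw [Set.disjoint_right]; intro x hx; exact hx.2
    have hRF : Disjoint R F := by
      rw [Set.disjoint_left]; intro x hx; exact hx.1.2
    have hcover : S ∪ R ∪ F = Set.univ := by
      ext x
      simp only [Set.mem_union, Set.mem_diff, Set.mem_univ, true_and, iff_true, hRdef]
      by_cases hxF : x ∈ F
      · exact Or.inr hxF
      · by_cases hxS : x ∈ S
        · exact Or.inl (Or.inl hxS)
        · exact Or.inl (Or.inr ⟨hxF, hxS⟩)
    have hsum : S.ncard + R.ncard + F.ncard = Fintype.card ι := by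
      have h1 : (S ∪ R ∪ F).ncard = Fintype.card ι := by
        rw [hcover, Set.ncard_univ, Nat.card_eq_fintype_card]
      rwa [Set.ncard_union_eq (Set.disjoint_union_left.mpr ⟨hSF, hRF⟩),
        Set.ncard_union_eq hSR] at h1
    have hSpos : 1 ≤ S.ncard := (Set.ncard_pos S.toFinite).mpr hSne
    have hRc : f + 1 ≤ R.ncard := by omega
    have hRne : R.Nonempty := Set.nonempty_of_ncard_ne_zero (by omega)
    obtain ⟨i, hiS, hicard⟩ :=
      (hA S R F hSne hRne hF hSR hSF hRF hcover).1 hRc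
    have hiF : i ∉ F := Set.disjoint_left.mp hSF hiS
    have hbound := hred.2.2 i hiF
    have hex : ∃ j ∈ inNbr E i ∩ R, E' j i := by
      by_contra hno
      push_neg at hno
      have hsub : inNbr E i ∩ R ⊆ {j | j ∉ F ∧ E j i ∧ ¬ E' j i} := by
        intro j hj
        exact ⟨Set.disjoint_left.mp hRF hj.2, hj.1, hno j hj⟩
      have := Set.ncard_le_ncard hsub {j | j ∉ F ∧ E j i ∧ ¬ E' j i}.toFinite
      omega
    obtain ⟨j, hj, hE'ji⟩ := hex
    exact Set.disjoint_left.mp hSR (hSedge j i hiS hE'ji) hj.2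
  · -- B → A
    intro hB L R F hL hR hF hLR hLF hRF hcover
    constructor
    · intro hRc
      exact keyBA f E hn hB L R F hL hR hF hLR hLF hRF hcover hRc
    · intro hLc
      have hcover' : R ∪ L ∪ F = Set.univ := by
        rw [Set.union_comm R L]; exact hcover
      exact keyBA f E hn hB R L F hR hL hF hLR.symm hRF hLF hcover' hLc
end

section
/- Let V be a finite set with |V| = n ≥ 2f+2 and let (X_i)_{i∈V} be subsets of a set Y satisfying 2f-redundancy (Property C). Let F ⊆ V with |F| ≤ f, and let (Z_k)_{k∈V} be subsets of Y such that Z_k = X_k for every k ∈ V \ F (Z_k is arbitrary for k ∈ F). Then for every i ∈ V \ F, the set O_i = { y ∈ X_i : |{ k ∈ V : y ∉ Z_k }| ≤ f } equals ⋂_{j∈V\F} X_j. -/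
/-- Correctness of the filtering step of the unconstrained decentralized
algorithm: with `n = |V| ≥ 2f + 2` agents whose local sets `X i` satisfy
`2f`-redundancy (Property C), a set `F` of at most `f` Byzantine agents, and
recorded sets `Z k` agreeing with `X k` for non-faulty `k`, every non-faulty
agent `i` has
`{y ∈ X i : |{k : y ∉ Z k}| ≤ f} = ⋂ j ∉ F, X j`. -/
theorem filtering_step_correct
    {ι Y : Type*} [Fintype ι] (f : ℕ)
    (hn : 2 * f + 2 ≤ Fintype.card ι)
    (X : ι → Set Y)
    (hC1 : (⋂ i, X i).Nonempty)
    (hC2 : ∀ y : Y, y ∉ ⋂ i, X i → 2 * f + 1 ≤ {i : ι | y ∉ X i}.ncard)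
    (F : Set ι) (hF : F.ncard ≤ f)
    (Z : ι → Set Y) (hZ : ∀ k ∉ F, Z k = X k) :
    ∀ i ∉ F,
      {y ∈ X i | {k : ι | y ∉ Z k}.ncard ≤ f} = ⋂ j ∈ Fᶜ, X j := by
  intro i hi
  ext y
  simp only [Set.mem_setOf_eq, Set.mem_iInter, Set.mem_compl_iff]
  constructor
  · rintro ⟨hyX, hcnt⟩ j hj
    by_contra hyj
    have hyAll : y ∉ ⋂ k, X k := by
      simp only [Set.mem_iInter]; exact fun h => hyj (h j)
    have hS := hC2 y hyAll
    set S := {k : ι | y ∉ X k} with hSdef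
    set T := {k : ι | y ∉ Z k} with hTdef
    have hsub : S \ F ⊆ T := by
      rintro k ⟨hkS, hkF⟩
      simpa [hTdef, hSdef, hZ k hkF] using hkS
    have h1 : S.ncard ≤ (S \ F).ncard + F.ncard :=
      Set.ncard_le_ncard_diff_add_ncard S F (Set.toFinite F)
    have h2 : (S \ F).ncard ≤ T.ncard :=
      Set.ncard_le_ncard hsub (Set.toFinite T)
    omega
  · intro h
    refine ⟨h i hi, ?_⟩
    have hsub : {k : ι | y ∉ Z k} ⊆ F := by
      intro k hk
      by_contra hkF
      exact hk (by simpa [hZ k hkF] using h k hkF)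
    exact le_trans (Set.ncard_le_ncard hsub (Set.toFinite F)) hF
end
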